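/- On ℝ³ with coordinates (x, y, z), let P be the constant bivector [[0, 1, 0], [−1, 0, 0], [0, 0, 0]] and τ = (−x − x³/3, 0, zx² − x²y²). Let H = x²y² − zx² − z, H̃ = z, and let X be the vector field with components Xⁱ = Σ_j Pⁱʲ ∂H/∂xʲ (i.e. X = P dH). Then L_X(P) = 0, L_X(L_τ(P)) = 0, and Xⁱ = Σ_j (L_τ(P))ⁱʲ ∂H̃/∂xʲ (i.e. X = L_τ(P) dH̃); hence X is globally bi-Hamiltonian with respect to the compatible Poisson bivectors P and L_τ(P). -/

import Mathlib

open Matrix BigOperators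

noncomputable section

/-- Partial derivative of a scalar function on ℝⁿ in the `k`-th coordinate direction. -/
def pd {n : ℕ} (k : Fin n) (f : (Fin n → ℝ) → ℝ) (x : Fin n → ℝ) : ℝ :=
  fderiv ℝ f x (Pi.single k 1)

/-- A (smooth) bivector on ℝⁿ: a smooth field of antisymmetric matrices. -/
def IsBivector {n : ℕ} (P : (Fin n → ℝ) → Matrix (Fin n) (Fin n) ℝ) : Prop :=
  (∀ i j, ContDiff ℝ (⊤ : ℕ∞) fun x => P x i j) ∧ ∀ x, (P x)ᵀ = -P x

/-- A smooth vector field on ℝⁿ. -/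
def IsVectorField {n : ℕ} (τ : (Fin n → ℝ) → (Fin n → ℝ)) : Prop :=
  ∀ i, ContDiff ℝ (⊤ : ℕ∞) fun x => τ x i

/-- Components of the Schouten bracket of two bivectors:
`[H,K]^{ijk} = -∑ₘ (K^{mk} ∂ₘH^{ij} + H^{mk} ∂ₘK^{ij} + cyclic permutations of (i,j,k))`. -/
def schouten {n : ℕ} (H K : (Fin n → ℝ) → Matrix (Fin n) (Fin n) ℝ)
    (x : Fin n → ℝ) (i j k : Fin n) : ℝ :=
  -∑ m, (K x m k * pd m (fun y => H y i j) x + H x m k * pd m (fun y => K y i j) x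
       + K x m i * pd m (fun y => H y j k) x + H x m i * pd m (fun y => K y j k) x
       + K x m j * pd m (fun y => H y k i) x + H x m j * pd m (fun y => K y k i) x)

/-- Lie derivative of a bivector along a vector field:
`(L_τ P)^{ij} = ∑ₖ (τ^k ∂ₖP^{ij} - P^{kj} ∂ₖτ^i - P^{ik} ∂ₖτ^j)`. -/
def lieD {n : ℕ} (τ : (Fin n → ℝ) → (Fin n → ℝ))
    (P : (Fin n → ℝ) → Matrix (Fin n) (Fin n) ℝ)
    (x : Fin n → ℝ) : Matrix (Fin n) (Fin n) ℝ :=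
  Matrix.of fun i j => ∑ k, (τ x k * pd k (fun y => P y i j) x
    - P x k j * pd k (fun y => τ y i) x - P x i k * pd k (fun y => τ y j) x)

/-- A Poisson bivector: a bivector whose Schouten bracket with itself vanishes. -/
def IsPoisson {n : ℕ} (P : (Fin n → ℝ) → Matrix (Fin n) (Fin n) ℝ) : Prop :=
  IsBivector P ∧ ∀ x i j k, schouten P P x i j k = 0

/-- Two bivectors are compatible if their Schouten bracket vanishes. -/
def Compatible {n : ℕ} (P Q : (Fin n → ℝ) → Matrix (Fin n) (Fin n) ℝ) : Prop :=
  ∀ x i j k, schouten P Q x i j k = 0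

/-- The canonical Poisson structure `[[0,1,0],[−1,0,0],[0,0,0]]` on ℝ³. -/
def Pcan3 (_ : Fin 3 → ℝ) : Matrix (Fin 3) (Fin 3) ℝ :=
  !![0, 1, 0; -1, 0, 0; 0, 0, 0]

/-- The vector field `τ = (−x − x³/3, 0, zx² − x²y²)` on ℝ³. -/
def tau3 (x : Fin 3 → ℝ) : Fin 3 → ℝ :=
  ![-(x 0) - (x 0) ^ 3 / 3, 0, x 2 * (x 0) ^ 2 - (x 0) ^ 2 * (x 1) ^ 2]

/-- The Hamiltonian `H = x²y² − zx² − z`. -/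
def Ham3 (x : Fin 3 → ℝ) : ℝ := (x 0) ^ 2 * (x 1) ^ 2 - x 2 * (x 0) ^ 2 - x 2

/-- The second Hamiltonian `H̃ = z`. -/
def HamTilde3 (x : Fin 3 → ℝ) : ℝ := x 2

/-- The Hamiltonian vector field `X = P dH`. -/
def Xham3 (x : Fin 3 → ℝ) : Fin 3 → ℝ :=
  fun i => ∑ j, Pcan3 x i j * pd j Ham3 x


section Aux

variable {n : ℕ} {k : Fin n} {x : Fin n → ℝ} {f g : (Fin n → ℝ) → ℝ}

lemma pd_const (c : ℝ) : pd k (fun _ => c) x = 0 := by simp [pd]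

lemma pd_coord (i : Fin n) : pd k (fun y => y i) x = if i = k then 1 else 0 := by
  have h : HasFDerivAt (fun y : Fin n → ℝ => y i)
      (ContinuousLinearMap.proj i : (Fin n → ℝ) →L[ℝ] ℝ) x :=
    (ContinuousLinearMap.proj (R := ℝ) (φ := fun _ : Fin n => ℝ) i).hasFDerivAt
  simp [pd, h.fderiv, Pi.single_apply]

lemma pd_add (hf : DifferentiableAt ℝ f x) (hg : DifferentiableAt ℝ g x) :
    pd k (fun y => f y + g y) x = pd k f x + pd k g x := by
  simp [pd, fderiv_fun_add hf hg]

lemma pd_sub (hf : DifferentiableAt ℝ f x) (hg : DifferentiableAt ℝ g x) :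
    pd k (fun y => f y - g y) x = pd k f x - pd k g x := by
  simp [pd, fderiv_fun_sub hf hg]

lemma pd_neg : pd k (fun y => -f y) x = -pd k f x := by
  simp [pd, fderiv_neg]

lemma pd_mul (hf : DifferentiableAt ℝ f x) (hg : DifferentiableAt ℝ g x) :
    pd k (fun y => f y * g y) x = pd k f x * g x + f x * pd k g x := by
  simp [pd, fderiv_fun_mul hf hg]; ring

lemma pd_div_const (c : ℝ) (hf : DifferentiableAt ℝ f x) :
    pd k (fun y => f y / c) x = pd k f x / c := by
  simp [pd, div_eq_mul_inv, fderiv_mul_const hf, mul_comm]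

lemma pd_pow (m : ℕ) (hf : DifferentiableAt ℝ f x) :
    pd k (fun y => f y ^ (m + 1)) x = (m + 1) * f x ^ m * pd k f x := by
  induction m with
  | zero => simp
  | succ m ih =>
      have h : (fun y => f y ^ (m + 1 + 1)) = fun y => f y ^ (m + 1) * f y := by
        funext y; ring
      rw [h, pd_mul (f := fun y => f y ^ (m + 1)) (hf.pow _) hf, ih]
      push_cast; ring

end Aux

/-- Explicit form of the Hamiltonian vector field `X = P dH`. -/
def X3' (x : Fin 3 → ℝ) : Fin 3 → ℝ :=
  ![2 * x 0 ^ 2 * x 1, 2 * x 2 * x 0 - 2 * x 0 * x 1 ^ 2, 0]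

/-- Explicit form of `Q = L_τ P`. -/
def Q3' (x : Fin 3 → ℝ) : Matrix (Fin 3) (Fin 3) ℝ :=
  !![0, 1 + x 0 ^ 2, 2 * x 0 ^ 2 * x 1;
     -(1 + x 0 ^ 2), 0, 2 * x 0 * x 2 - 2 * x 0 * x 1 ^ 2;
     -(2 * x 0 ^ 2 * x 1), -(2 * x 0 * x 2 - 2 * x 0 * x 1 ^ 2), 0]

lemma pd_P3 (k i j : Fin 3) (x : Fin 3 → ℝ) : pd k (fun y => Pcan3 y i j) x = 0 :=
  pd_const _

lemma pd_Ham3 (k : Fin 3) (x : Fin 3 → ℝ) :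
    pd k Ham3 x = ![2 * x 0 * x 1 ^ 2 - 2 * x 2 * x 0, 2 * x 0 ^ 2 * x 1, -(x 0 ^ 2) - 1] k := by
  have h : Ham3 = fun y : Fin 3 → ℝ => (y 0) ^ 2 * (y 1) ^ 2 - y 2 * (y 0) ^ 2 - y 2 := rfl
  rw [h]
  fin_cases k <;>
    simp (disch := fun_prop) [pd_sub, pd_mul, pd_pow, pd_coord, pd_const] <;> ring

lemma pd_HamTilde3 (k : Fin 3) (x : Fin 3 → ℝ) :
    pd k HamTilde3 x = if (2 : Fin 3) = k then 1 else 0 := by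
  have h : HamTilde3 = fun y : Fin 3 → ℝ => y 2 := rfl
  rw [h, pd_coord]

lemma pd_tau3 (k i : Fin 3) (x : Fin 3 → ℝ) :
    pd k (fun y => tau3 y i) x =
      ![![-1 - x 0 ^ 2, 0, 0], ![0, 0, 0],
        ![2 * x 2 * x 0 - 2 * x 0 * x 1 ^ 2, -(2 * x 0 ^ 2 * x 1), x 0 ^ 2]] i k := by
  fin_cases i <;> fin_cases k <;>
    simp (disch := fun_prop)
      [tau3, pd_sub, pd_add, pd_neg, pd_mul, pd_pow, pd_coord, pd_const, pd_div_const,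
       Matrix.vecHead, Matrix.vecTail] <;>
    first | rfl | ring1 | tauto | (left; ring1) | (right; ring1)

lemma X3_eq : Xham3 = X3' := by
  funext x i
  fin_cases i <;>
    simp [Xham3, X3', Fin.sum_univ_three, pd_Ham3, Pcan3, Matrix.vecHead, Matrix.vecTail] <;>
    first | rfl | ring1 | tauto | (left; ring1) | (right; ring1)

lemma Q3_eq : lieD tau3 Pcan3 = Q3' := by
  funext x
  ext i j
  fin_cases i <;> fin_cases j <;>
    simp only [lieD, Matrix.of_apply, Fin.sum_univ_three, pd_P3, pd_tau3] <;>
    simp [Pcan3, Q3', Matrix.vecHead, Matrix.vecTail] <;>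
    first | rfl | ring1 | tauto | (left; ring1) | (right; ring1)

lemma pd_X3 (k i : Fin 3) (x : Fin 3 → ℝ) :
    pd k (fun y => X3' y i) x =
      ![![4 * x 0 * x 1, 2 * x 0 ^ 2, 0],
        ![2 * x 2 - 2 * x 1 ^ 2, -(4 * x 0 * x 1), 2 * x 0],
        ![0, 0, 0]] i k := by
  fin_cases i <;> fin_cases k <;>
    simp (disch := fun_prop)
      [X3', pd_sub, pd_add, pd_neg, pd_mul, pd_pow, pd_coord, pd_const,
       Matrix.vecHead, Matrix.vecTail] <;>
    first | rfl | ring1 | tauto | (left; ring1) | (right; ring1)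

lemma pd_Q3 (k i j : Fin 3) (x : Fin 3 → ℝ) :
    pd k (fun y => Q3' y i j) x =
      ![![![0, 0, 0], ![2 * x 0, 0, 0], ![4 * x 0 * x 1, 2 * x 0 ^ 2, 0]],
        ![![-(2 * x 0), 0, 0], ![0, 0, 0], ![2 * x 2 - 2 * x 1 ^ 2, -(4 * x 0 * x 1), 2 * x 0]],
        ![![-(4 * x 0 * x 1), -(2 * x 0 ^ 2), 0],
          ![-(2 * x 2 - 2 * x 1 ^ 2), 4 * x 0 * x 1, -(2 * x 0)], ![0, 0, 0]]] i j k := by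
  fin_cases i <;> fin_cases j <;> fin_cases k <;>
    simp (disch := fun_prop)
      [Q3', pd_sub, pd_add, pd_neg, pd_mul, pd_pow, pd_coord, pd_const,
       Matrix.vecHead, Matrix.vecTail] <;>
    first | rfl | ring1 | tauto | (left; ring1) | (right; ring1)

set_option maxHeartbeats 2000000 in
/-- `L_X(P) = 0`, `L_X(L_τ(P)) = 0` and `X = L_τ(P) dH̃`; hence `X` is
globally bi-Hamiltonian with respect to the compatible Poisson bivectors `P` and `L_τ(P)`. -/
theorem blrw_biHamiltonian :
    (∀ x, lieD Xham3 Pcan3 x = 0) ∧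
      (∀ x, lieD Xham3 (lieD tau3 Pcan3) x = 0) ∧
      (∀ x i, Xham3 x i = ∑ j, lieD tau3 Pcan3 x i j * pd j HamTilde3 x) ∧
      IsPoisson Pcan3 ∧ IsPoisson (lieD tau3 Pcan3) ∧
      Compatible Pcan3 (lieD tau3 Pcan3) := by
  have hX : Xham3 = X3' := X3_eq
  have hQ : lieD tau3 Pcan3 = Q3' := Q3_eq
  rw [hX, hQ]
  refine ⟨?_, ?_, ?_, ⟨⟨?_, ?_⟩, ?_⟩, ⟨⟨?_, ?_⟩, ?_⟩, ?_⟩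
  · intro x
    ext i j
    fin_cases i <;> fin_cases j <;>
      simp only [lieD, Matrix.of_apply, Fin.sum_univ_three, pd_P3, pd_X3] <;>
      simp [Pcan3, X3', Matrix.vecHead, Matrix.vecTail] <;>
    first | rfl | ring1 | tauto | (left; ring1) | (right; ring1)
  · intro x
    ext i j
    fin_cases i <;> fin_cases j <;>
      simp only [lieD, Matrix.of_apply, Fin.sum_univ_three, pd_Q3, pd_X3] <;>
      simp [Q3', X3', Matrix.vecHead, Matrix.vecTail] <;>
    first | rfl | ring1 | tauto | (left; ring1) | (right; ring1)
  · intro x i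
    fin_cases i <;>
      simp only [Fin.sum_univ_three, pd_HamTilde3] <;>
      simp [X3', Q3', Matrix.vecHead, Matrix.vecTail] <;>
    first | rfl | ring1 | tauto | (left; ring1) | (right; ring1)
  · intro i j
    exact contDiff_const
  · intro x
    ext i j
    fin_cases i <;> fin_cases j <;> simp [Pcan3, Matrix.vecHead, Matrix.vecTail]
  · intro x i j k
    simp [schouten, pd_P3]
  · intro i j
    fin_cases i <;> fin_cases j <;> simp [Q3'] <;> fun_prop
  · intro x
    ext i j
    fin_cases i <;> fin_cases j <;> simp [Q3', Matrix.vecHead, Matrix.vecTail] <;>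
      first | rfl | ring1 | tauto | (left; ring1) | (right; ring1)
  · intro x i j k
    fin_cases i <;> fin_cases j <;> fin_cases k <;>
      simp only [schouten, Fin.sum_univ_three, pd_Q3] <;>
      simp [Q3', Matrix.vecHead, Matrix.vecTail] <;>
    first | rfl | ring1 | tauto | (left; ring1) | (right; ring1)
  · intro x i j k
    fin_cases i <;> fin_cases j <;> fin_cases k <;>
      simp only [schouten, Fin.sum_univ_three, pd_P3, pd_Q3] <;>
      simp [Pcan3, Q3', Matrix.vecHead, Matrix.vecTail] <;>
    first | rfl | ring1 | tauto | (left; ring1) | (right; ring1)
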